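/- arXiv:2403.07477 — 9 statements merged into one kernel-verified Lean document; each statement's English description precedes it below -/
import Mathlib

section
/- Let m ≥ 2 and let n = km + j with j ∈ {0,…,m-1} and k ∈ {0,…,m-1} (i.e., n < m²). Then p_m(n,t) = t^{k+j} · (t^{(m-1)(k+1)} - 1)/(t^{m-1} - 1), where the fraction denotes the polynomial 1 + t^{m-1} + ⋯ + t^{(m-1)k}. -/
noncomputable def pm (m : ℕ) : ℕ → Polynomial ℤ
  | 0 => 1
  | n + 1 =>
      Polynomial.X * pm m n +
        if h : 2 ≤ m ∧ m ∣ (n + 1) then pm m ((n + 1) / m) else 0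
decreasing_by
  · exact Nat.lt_succ_self n
  · exact Nat.div_lt_self (Nat.succ_pos n) (by omega)

/-!
Between two consecutive multiples of `m` the recursion only multiplies by `t`, so
`p_m(km + j) = t^j p_m(km)`; in particular `p_m(j) = t^j` for `j < m`. Crossing the multiple
`(k + 1)m` adds `p_m(k + 1) = t^(k+1)` (here `k + 1 < m` is used), which turns
`p_m(km) = t^k S_k` into `p_m((k + 1)m) = t^(k+1) (t^(m-1) S_k + 1) = t^(k+1) S_(k+1)` for the
geometric sums `S_k = ∑_{i ≤ k} t^((m-1)i)`.
-/

open Polynomial Finset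

variable {m : ℕ}

theorem pm_zero : pm m 0 = 1 := by
  rw [pm]

theorem pm_succ_of_not_dvd {n : ℕ} (h : ¬m ∣ n + 1) : pm m (n + 1) = X * pm m n := by
  rw [pm, dif_neg (fun h' => h h'.2), add_zero]

theorem pm_succ_of_dvd {n : ℕ} (hm : 2 ≤ m) (h : m ∣ n + 1) :
    pm m (n + 1) = X * pm m n + pm m ((n + 1) / m) := by
  rw [pm, dif_pos ⟨hm, h⟩]

theorem pm_add_of_dvd {n j : ℕ} (hn : m ∣ n) (hj : j < m) : pm m (n + j) = X ^ j * pm m n := by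
  induction j with
  | zero => rw [add_zero, pow_zero, one_mul]
  | succ j ih =>
    have hndvd : ¬m ∣ n + j + 1 := fun h =>
      Nat.not_dvd_of_pos_of_lt j.succ_pos hj ((Nat.dvd_add_right hn).mp (add_assoc n j 1 ▸ h))
    rw [← add_assoc, pm_succ_of_not_dvd hndvd, ih (by omega), pow_succ', mul_assoc]

theorem pm_of_lt {j : ℕ} (hj : j < m) : pm m j = X ^ j := by
  simpa [pm_zero] using pm_add_of_dvd (dvd_zero m) hj

theorem pm_mul_of_lt {k : ℕ} (hk : k < m) :
    pm m (k * m) = X ^ k * ∑ i ∈ range (k + 1), (X ^ (m - 1)) ^ i := by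
  induction k with
  | zero => simp [pm_zero]
  | succ k ih =>
    have hm : 2 ≤ m := by omega
    have hsplit : (k + 1) * m = k * m + (m - 1) + 1 := by
      rw [add_mul, one_mul]; omega
    have hdvd : m ∣ k * m + (m - 1) + 1 := hsplit ▸ dvd_mul_left m (k + 1)
    have hquot : (k * m + (m - 1) + 1) / m = k + 1 := by
      rw [← hsplit, Nat.mul_div_cancel _ (by omega)]
    rw [hsplit, pm_succ_of_dvd hm hdvd, hquot, pm_add_of_dvd (dvd_mul_left m k) (by omega),
      ih (by omega), pm_of_lt hk, geom_sum_succ (n := k + 1)]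
    ring

theorem pm_small_general (m k j : ℕ) (hj : j < m) (hk : k < m) :
    pm m (k * m + j) =
      Polynomial.X ^ (k + j) * ∑ i ∈ Finset.range (k + 1), Polynomial.X ^ ((m - 1) * i) := by
  simp only [pow_mul]
  rw [pm_add_of_dvd (dvd_mul_left m k) hj, pm_mul_of_lt hk, pow_add]
  ring

/-- For n = km + j < m², an explicit formula for p_m(n,t). -/
theorem pm_small (m k j : ℕ) (hm : 2 ≤ m) (hj : j < m) (hk : k < m) :
    pm m (k * m + j) =
      Polynomial.X ^ (k + j) * ∑ i ∈ Finset.range (k + 1), Polynomial.X ^ ((m - 1) * i) :=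
  pm_small_general m k j hj hk
end

section
/- Let m ≥ 2. For every natural number n, the order of vanishing at t=0 of the m-ary partition polynomial p_m(n,t) equals s_m(n), the sum of digits of n in base m. -/
/-! The recursion strips the last base-`m` digit `r` of `m * q + r` as a factor `X ^ r`, and for
`q ≥ 1` gives `p(m q) = X ^ m p(m (q - 1)) + p(q)`. Inductively the first summand vanishes to
order `m + s(q - 1)`, which exceeds `s(q) ≤ s(q - 1) + 1`, so `p(m q)` vanishes to order exactly
`s(q) = s(m q)`. -/

open Polynomial

namespace Nat

theorem digits_sum_mul_add {m : ℕ} (hm : 2 ≤ m) (q : ℕ) {r : ℕ} (hr : r < m) :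
    (digits m (m * q + r)).sum = r + (digits m q).sum := by
  rcases Nat.eq_zero_or_pos q with rfl | hq
  · rcases Nat.eq_zero_or_pos r with rfl | hr0
    · simp
    · simp [Nat.digits_of_lt m r hr0.ne' hr]
  · rw [add_comm, Nat.digits_add m hm r q hr (Or.inr hq.ne'), List.sum_cons]

theorem digits_sum_mul {m : ℕ} (hm : 2 ≤ m) (q : ℕ) :
    (digits m (m * q)).sum = (digits m q).sum := by
  simpa using digits_sum_mul_add hm q (r := 0) (by omega)

theorem digits_sum_succ_le {m : ℕ} (hm : 2 ≤ m) (n : ℕ) :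
    (digits m (n + 1)).sum ≤ (digits m n).sum + 1 := by
  induction n using Nat.strong_induction_on with
  | _ n ih =>
  obtain ⟨q, r, hr, rfl⟩ : ∃ q r, r < m ∧ n = m * q + r :=
    ⟨n / m, n % m, Nat.mod_lt _ (by omega), (Nat.div_add_mod n m).symm⟩
  rw [digits_sum_mul_add hm q hr]
  rcases Nat.lt_or_ge (r + 1) m with hr1 | hr1
  · rw [add_assoc, digits_sum_mul_add hm q hr1]
    omega
  · have hcarry : m * q + r + 1 = m * (q + 1) := by rw [mul_add]; omega
    have hq : q < m * q + r := by nlinarith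
    rw [hcarry, digits_sum_mul hm]
    have := ih q hq
    omega

end Nat

theorem Polynomial.rootMultiplicity_add_of_lt {R : Type*} [CommRing R] {p q : R[X]} {a : R}
    (hq : q ≠ 0) (h : rootMultiplicity a q < rootMultiplicity a p) :
    rootMultiplicity a (p + q) = rootMultiplicity a q := by
  have hp : (X - C a) ^ (rootMultiplicity a q + 1) ∣ p :=
    (pow_dvd_pow _ h).trans (pow_rootMultiplicity_dvd p a)
  have hq_not : ¬(X - C a) ^ (rootMultiplicity a q + 1) ∣ p + q := by
    rw [dvd_add_right hp]
    exact pow_rootMultiplicity_not_dvd hq a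
  have hpq : p + q ≠ 0 := fun h0 => hq_not (h0 ▸ dvd_zero _)
  refine le_antisymm ((rootMultiplicity_le_iff hpq a _).2 hq_not) ?_
  rw [le_rootMultiplicity_iff hpq]
  exact dvd_add ((pow_dvd_pow _ h.le).trans (pow_rootMultiplicity_dvd p a))
    (pow_rootMultiplicity_dvd q a)

theorem Polynomial.rootMultiplicity_zero_X_pow_mul {R : Type*} [CommRing R] {p : R[X]}
    (hp : p ≠ 0) (n : ℕ) : rootMultiplicity 0 (X ^ n * p) = n + rootMultiplicity 0 p := by
  rw [mul_comm, rootMultiplicity_eq_natTrailingDegree', natTrailingDegree_mul_X_pow hp,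
    rootMultiplicity_eq_natTrailingDegree', add_comm]

theorem pm_succ (m n : ℕ) :
    pm m (n + 1) = X * pm m n + if 2 ≤ m ∧ m ∣ (n + 1) then pm m ((n + 1) / m) else 0 := by
  rw [pm, dite_eq_ite]

theorem one_le_eval_one_pm (m n : ℕ) : 1 ≤ (pm m n).eval 1 := by
  induction n using Nat.strong_induction_on with
  | _ n ih =>
  rcases n with _ | n
  · simp [pm]
  rw [pm_succ]
  split_ifs with h
  · have := ih ((n + 1) / m) (Nat.div_lt_self n.succ_pos (by omega))
    have := ih n n.lt_succ_self
    simp only [eval_add, eval_mul, eval_X, one_mul]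
    linarith
  · simpa using ih n n.lt_succ_self

theorem pm_ne_zero (m n : ℕ) : pm m n ≠ 0 := fun h => by
  simpa [h] using one_le_eval_one_pm m n

theorem pm_mul_add {m : ℕ} (q : ℕ) {r : ℕ} (hr : r < m) :
    pm m (m * q + r) = X ^ r * pm m (m * q) := by
  induction r with
  | zero => simp
  | succ r ih =>
    have hndvd : ¬m ∣ m * q + r + 1 := by
      rw [add_assoc, Nat.dvd_add_right (dvd_mul_right m q)]
      exact Nat.not_dvd_of_pos_of_lt r.succ_pos hr
    rw [← add_assoc, pm_succ, if_neg (fun h => hndvd h.2), add_zero, ih (by omega), pow_succ',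
      mul_assoc]

theorem pm_mul_succ {m : ℕ} (hm : 2 ≤ m) (q : ℕ) :
    pm m (m * (q + 1)) = X ^ m * pm m (m * q) + pm m (q + 1) := by
  have hsplit : m * (q + 1) = m * q + (m - 1) + 1 := by rw [mul_add]; omega
  rw [hsplit, pm_succ, if_pos ⟨hm, hsplit ▸ dvd_mul_right m (q + 1)⟩, ← hsplit,
    Nat.mul_div_cancel_left _ (by omega), pm_mul_add q (by omega), ← mul_assoc, ← pow_succ',
    Nat.sub_add_cancel (by omega)]

/-- The order of vanishing of p_m(n,t) at t = 0 equals the base-m digit sum of n. -/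
theorem rootMultiplicity_pm (m : ℕ) (hm : 2 ≤ m) (n : ℕ) :
    Polynomial.rootMultiplicity 0 (pm m n) = (Nat.digits m n).sum := by
  induction n using Nat.strong_induction_on with
  | _ n ih =>
  obtain ⟨q, r, hr, rfl⟩ : ∃ q r, r < m ∧ n = m * q + r :=
    ⟨n / m, n % m, Nat.mod_lt _ (by omega), (Nat.div_add_mod n m).symm⟩
  rw [pm_mul_add q hr, rootMultiplicity_zero_X_pow_mul (pm_ne_zero m _),
    Nat.digits_sum_mul_add hm q hr]
  congr 1
  rcases q with _ | q
  · simp [pm]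
  have ih_quot := ih (q + 1) (by nlinarith)
  have ih_prev := ih (m * q) (by nlinarith)
  rw [pm_mul_succ hm, Polynomial.rootMultiplicity_add_of_lt (pm_ne_zero m _), ih_quot]
  rw [rootMultiplicity_zero_X_pow_mul (pm_ne_zero m _), ih_prev, ih_quot, Nat.digits_sum_mul hm]
  have hcarry := Nat.digits_sum_succ_le hm q
  omega
end

section
/- Let m ≥ 2 be even and let n = a_0 + a_1 m + ⋯ + a_k m^k be the base m representation of n. Then p_m(n,-1) = (-1)^{a_0} ∏_{j=1}^{k} (1+(-1)^{a_j})/2. In particular, p_m(n,-1) ∈ {-1,0,1}, and p_m(n,-1) = 0 if and only if some digit a_j with j ≥ 1 is odd. -/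
/-!
Write `f n = p_m(n, -1)` and let `E q ∈ {0, 1}` indicate that every base-`m` digit of `q` is
even. Between multiples of `m` the recursion only flips signs, so `f (d + m q) = (-1)^d f (m q)`
for `d < m`. Since `m - 1` is odd, the recursion at `m (q + 1)` becomes
`f (m (q + 1)) = f (m q) + f (q + 1)`, and with `q + 1 = r + m s` the digit identity
`E (q + 1) = E q + (-1)^r E s` shows that `E` satisfies the same recursion as `q ↦ f (m q)`.
Hence `f (m q) = E q` by strong induction, and `f (a₀ + m q) = (-1)^a₀ E q`.
-/

open Finset

theorem sum_range_succ_mul_pow {R : Type*} [CommSemiring R] (a : ℕ → R) (m : R) (k : ℕ) :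
    ∑ j ∈ range (k + 1), a j * m ^ j = a 0 + m * ∑ j ∈ range k, a (j + 1) * m ^ j := by
  rw [sum_range_succ', mul_sum, add_comm]
  simp only [pow_succ, pow_zero, mul_one]
  congr 1
  exact sum_congr rfl fun j _ => by ring

def evenDigitsIndicator (m n : ℕ) : ℤ := if ∀ d ∈ Nat.digits m n, Even d then 1 else 0

section

variable {m : ℕ}

theorem pm_eval_neg_one_succ (hm : 2 ≤ m) (n : ℕ) :
    (pm m (n + 1)).eval (-1) =
      -(pm m n).eval (-1) + if m ∣ n + 1 then (pm m ((n + 1) / m)).eval (-1) else 0 := by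
  rw [pm]
  by_cases h : m ∣ n + 1 <;> simp [h, hm]

theorem pm_eval_neg_one_add_mul (hm : 2 ≤ m) {d : ℕ} (hd : d < m) (q : ℕ) :
    (pm m (d + m * q)).eval (-1) = (-1) ^ d * (pm m (m * q)).eval (-1) := by
  induction d with
  | zero => simp
  | succ d ih =>
    have hndvd : ¬ m ∣ d + 1 + m * q := by
      rw [Nat.dvd_add_left (dvd_mul_right m q)]
      exact Nat.not_dvd_of_pos_of_lt d.succ_pos hd
    rw [add_right_comm, pm_eval_neg_one_succ hm, add_right_comm, if_neg hndvd, ih (by omega),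
      pow_succ]
    ring

theorem pm_eval_neg_one_eq_mod_div (hm : 2 ≤ m) (n : ℕ) :
    (pm m n).eval (-1) = (-1) ^ (n % m) * (pm m (m * (n / m))).eval (-1) := by
  conv_lhs => rw [← Nat.mod_add_div n m]
  exact pm_eval_neg_one_add_mul hm (Nat.mod_lt n (by omega)) _

theorem pm_eval_neg_one_mul_succ (hm : 2 ≤ m) (hme : Even m) (q : ℕ) :
    (pm m (m * (q + 1))).eval (-1) = (pm m (m * q)).eval (-1) + (pm m (q + 1)).eval (-1) := by
  have hsplit : m * (q + 1) = (m - 1 + m * q) + 1 := by rw [mul_add]; omega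
  have hodd : Odd (m - 1) := Nat.Even.sub_odd (by omega) hme odd_one
  rw [hsplit, pm_eval_neg_one_succ hm, ← hsplit, if_pos (dvd_mul_right m _),
    Nat.mul_div_cancel_left _ (by omega), pm_eval_neg_one_add_mul hm (by omega), hodd.neg_one_pow]
  ring

@[simp]
theorem evenDigitsIndicator_zero : evenDigitsIndicator m 0 = 1 := by
  simp [evenDigitsIndicator]

theorem evenDigitsIndicator_add_mul (hm : 2 ≤ m) {d : ℕ} (hd : d < m) (q : ℕ) :
    evenDigitsIndicator m (d + m * q) = (if Even d then 1 else 0) * evenDigitsIndicator m q := by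
  by_cases h : d = 0 ∧ q = 0
  · simp [h.1, h.2]
  · rw [evenDigitsIndicator, Nat.digits_add m hm d q hd (by tauto), evenDigitsIndicator]
    by_cases hd : Even d <;> simp [hd]

theorem evenDigitsIndicator_succ (hm : 2 ≤ m) (hme : Even m) (q : ℕ) :
    evenDigitsIndicator m (q + 1) =
      evenDigitsIndicator m q + (-1) ^ ((q + 1) % m) * evenDigitsIndicator m ((q + 1) / m) := by
  have hq := Nat.mod_add_div (q + 1) m
  have hr : (q + 1) % m < m := Nat.mod_lt _ (by omega)
  generalize (q + 1) % m = r at hq hr ⊢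
  generalize (q + 1) / m = s at hq ⊢
  rw [← hq]
  rcases r with _ | r
  · obtain ⟨s, rfl⟩ : ∃ s', s = s' + 1 :=
      Nat.exists_eq_add_one.mpr (Nat.pos_of_ne_zero (by rintro rfl; simp at hq))
    have hq' : q = m - 1 + m * s := by rw [mul_add] at hq; omega
    have hodd : ¬ Even (m - 1) :=
      Nat.not_even_iff_odd.mpr (Nat.Even.sub_odd (by omega) hme odd_one)
    rw [hq', evenDigitsIndicator_add_mul hm (d := m - 1) (by omega), if_neg hodd,
      evenDigitsIndicator_add_mul hm hr]
    simp
  · have hq' : q = r + m * s := by omega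
    rw [hq', evenDigitsIndicator_add_mul hm hr,
      evenDigitsIndicator_add_mul hm (by omega)]
    rcases Nat.even_or_odd r with h | h
    · simp [h, Nat.not_even_iff_odd.mpr h.add_one, pow_succ]
    · simp [h.add_one, Nat.not_even_iff_odd.mpr h]

theorem evenDigitsIndicator_sum (hm : 2 ≤ m) (k : ℕ) (b : ℕ → ℕ)
    (hb : ∀ j < k, b j < m) :
    evenDigitsIndicator m (∑ j ∈ range k, b j * m ^ j) =
      ∏ j ∈ range k, if Even (b j) then 1 else 0 := by
  induction k generalizing b with
  | zero => simp
  | succ k ih =>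
    rw [sum_range_succ_mul_pow, evenDigitsIndicator_add_mul hm (hb 0 (by omega)),
      ih _ fun j hj => hb (j + 1) (by omega), prod_range_succ' _ k, mul_comm]

theorem pm_eval_neg_one_mul (hm : 2 ≤ m) (hme : Even m) (q : ℕ) :
    (pm m (m * q)).eval (-1) = evenDigitsIndicator m q := by
  induction q using Nat.strong_induction_on with
  | _ q ih =>
    rcases q with _ | q
    · simp [pm]
    · rw [pm_eval_neg_one_mul_succ hm hme, ih q (by omega), evenDigitsIndicator_succ hm hme,
        pm_eval_neg_one_eq_mod_div hm, ih _ (Nat.div_lt_self q.succ_pos (by omega))]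

end

/-- For even m and n with base-m digits a_0,…,a_k, a formula for p_m(n,-1). -/
theorem pm_eval_neg_one_even (m k n : ℕ) (hm : 2 ≤ m) (hme : Even m)
    (a : ℕ → ℕ) (ha : ∀ j ≤ k, a j < m)
    (hn : n = ∑ j ∈ Finset.range (k + 1), a j * m ^ j) :
    (pm m n).eval (-1) = (-1) ^ (a 0) * ∏ j ∈ Finset.Icc 1 k, ((1 + (-1 : ℤ) ^ (a j)) / 2) ∧
    (pm m n).eval (-1) ∈ ({-1, 0, 1} : Set ℤ) ∧
    ((pm m n).eval (-1) = 0 ↔ ∃ j, 1 ≤ j ∧ j ≤ k ∧ Odd (a j)) := by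
  have hfactor (b : ℕ) : (1 + (-1 : ℤ) ^ b) / 2 = if Even b then 1 else 0 := by
    rcases Nat.even_or_odd b with h | h
    · simp [h, h.neg_one_pow]
    · simp [Nat.not_even_iff_odd.mpr h, h.neg_one_pow]
  have hval : (pm m n).eval (-1) = (-1) ^ a 0 * ∏ j ∈ Icc 1 k, if Even (a j) then 1 else 0 := by
    rw [hn, sum_range_succ_mul_pow, pm_eval_neg_one_add_mul hm (ha 0 (by omega)),
      pm_eval_neg_one_mul hm hme, evenDigitsIndicator_sum hm _ _ fun j hj => ha (j + 1) hj,
      ← Ico_add_one_right_eq_Icc, prod_Ico_eq_prod_range]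
    simp only [add_tsub_cancel_right, add_comm 1]
  classical
  simp only [hval, hfactor, prod_boole]
  refine ⟨trivial, ?_, ?_⟩
  · rcases neg_one_pow_eq_or ℤ (a 0) with h | h <;> split_ifs <;> simp [h]
  · simp
end

section
/- Let m ≥ 2 be even. Define e_m(n) as the number of partitions of n into powers of m with an even number of parts and o_m(n) as the number with an odd number of parts. Then |e_m(n) - o_m(n)| ≤ 1 for all n. -/
/-- Number of m-ary partitions of n (partitions into powers of m) with an even number of parts. -/
noncomputable def evenParts (m n : ℕ) : ℕ :=
  Nat.card {P : n.Partition // (∀ p ∈ P.parts, ∃ i, p = m ^ i) ∧ Even (Multiset.card P.parts)}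

/-- Number of m-ary partitions of n with an odd number of parts. -/
noncomputable def oddParts (m n : ℕ) : ℕ :=
  Nat.card {P : n.Partition // (∀ p ∈ P.parts, ∃ i, p = m ^ i) ∧ Odd (Multiset.card P.parts)}

/-!
Let `a(n) = e_m(n) - o_m(n)`. Removing one part `1` from a partition that has one, and dividing
every part by `m` in a partition that has none, gives `a(n + 1) + a(n) = [m ∣ n + 1] a((n + 1) / m)`,
the coefficientwise form of `(1 + q) A(q) = A(q^m)`. For even `m` this forces
`a(n) = (-1)^n S(n / m)` with `S(s) = ∑_{t ≤ s} a(t)`, and `S(s) = [s % m even] S(s / m)`, so `S`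
only takes the values `0` and `1`.
-/

open Finset

namespace Nat.Partition

def partsDvdEquiv {k t : ℕ} (hk : 0 < k) :
    {P : (k * t).Partition // ∀ p ∈ P.parts, k ∣ p} ≃ t.Partition where
  toFun P :=
    { parts := P.1.parts.map (· / k)
      parts_pos := by
        rintro _ hq
        obtain ⟨p, hp, rfl⟩ := Multiset.mem_map.1 hq
        exact Nat.div_pos (Nat.le_of_dvd (P.1.parts_pos hp) (P.2 p hp)) hk
      parts_sum := by
        refine Nat.eq_of_mul_eq_mul_left hk ?_
        rw [← Multiset.sum_map_mul_left,
          Multiset.map_congr rfl fun p hp => Nat.mul_div_cancel' (P.2 p hp), Multiset.map_id',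
          P.1.parts_sum] }
  invFun Q :=
    ⟨{ parts := Q.parts.map (k * ·)
       parts_pos := by
         rintro _ hp
         obtain ⟨q, hq, rfl⟩ := Multiset.mem_map.1 hp
         exact Nat.mul_pos hk (Q.parts_pos hq)
       parts_sum := by rw [Multiset.sum_map_mul_left, Multiset.map_id', Q.parts_sum] },
     by simp⟩
  left_inv P := Subtype.ext <| Partition.ext <| by
    simp only [Multiset.map_map, Function.comp_def]
    exact (Multiset.map_congr rfl fun p hp => Nat.mul_div_cancel' (P.2 p hp)).trans
      (Multiset.map_id' _)
  right_inv Q := Partition.ext <| by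
    simp only [Multiset.map_map, Function.comp_def, Nat.mul_div_cancel_left _ hk, Multiset.map_id']

@[simp]
theorem partsDvdEquiv_symm_apply_parts {k t : ℕ} (hk : 0 < k) (Q : t.Partition) :
    ((partsDvdEquiv hk).symm Q).1.parts = Q.parts.map (k * ·) :=
  rfl

end Nat.Partition

open Classical in
noncomputable def maryPartitions (m n : ℕ) : Finset n.Partition :=
  Nat.Partition.restricted n fun p => ∃ i, p = m ^ i

noncomputable def signedCount (m n : ℕ) : ℤ :=
  ∑ P ∈ maryPartitions m n, (-1) ^ P.parts.card

theorem mem_maryPartitions {m n : ℕ} {P : n.Partition} :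
    P ∈ maryPartitions m n ↔ ∀ p ∈ P.parts, ∃ i, p = m ^ i := by
  simp [maryPartitions, Nat.Partition.restricted]

theorem card_filter_even_sub_card_filter_odd {α R : Type*} [Ring R] (s : Finset α) (f : α → ℕ) :
    (#{x ∈ s | Even (f x)} : R) - #{x ∈ s | Odd (f x)} = ∑ x ∈ s, (-1) ^ f x := by
  rw [card_filter, card_filter, Nat.cast_sum, Nat.cast_sum, ← sum_sub_distrib]
  refine sum_congr rfl fun x _ => ?_
  rcases Nat.even_or_odd (f x) with h | h
  · simp [h, h.neg_one_pow, Nat.not_odd_iff_even.2 h]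
  · simp [h, h.neg_one_pow, Nat.not_even_iff_odd.2 h]

theorem evenParts_sub_oddParts (m n : ℕ) :
    (evenParts m n : ℤ) - oddParts m n = signedCount m n := by
  classical
  rw [signedCount, ← card_filter_even_sub_card_filter_odd, evenParts, oddParts,
    Nat.card_eq_fintype_card, Nat.card_eq_fintype_card, Fintype.card_subtype,
    Fintype.card_subtype, maryPartitions, Nat.Partition.restricted, filter_filter, filter_filter]

theorem signedCount_zero (m : ℕ) : signedCount m 0 = 1 := by
  simp [signedCount, maryPartitions, Nat.Partition.restricted]

theorem sum_maryPartitions_one_mem (m n : ℕ) :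
    ∑ P ∈ maryPartitions m (n + 1) with 1 ∈ P.parts, (-1 : ℤ) ^ P.parts.card =
      -signedCount m n := by
  rw [signedCount, ← sum_subtype_eq_sum_filter, ← sum_neg_distrib]
  refine sum_equiv (Nat.Partition.partitionWithPartEquiv le_rfl (Nat.le_add_left 1 n)) ?_ ?_
  · rintro ⟨P, hP⟩
    rw [mem_subtype, mem_maryPartitions, mem_maryPartitions,
      Nat.Partition.partitionWithPartEquiv_apply_parts]
    conv_lhs => rw [← Multiset.cons_erase hP]
    exact Multiset.forall_mem_cons.trans (and_iff_right ⟨0, (pow_zero m).symm⟩)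
  · rintro ⟨P, hP⟩ _
    rw [Nat.Partition.partitionWithPartEquiv_apply_parts, ← Multiset.card_erase_add_one hP,
      pow_succ, mul_neg_one]

theorem exists_mul_eq_pow_iff {m : ℕ} (hm : 1 < m) (q : ℕ) :
    (∃ i, m * q = m ^ i) ↔ ∃ i, q = m ^ i := by
  refine ⟨fun ⟨i, hi⟩ => ?_, fun ⟨i, hi⟩ => ⟨i + 1, by rw [hi, pow_succ']⟩⟩
  cases i with
  | zero => exact absurd (Nat.eq_one_of_mul_eq_one_right hi) hm.ne'
  | succ i => exact ⟨i, Nat.eq_of_mul_eq_mul_left (Nat.zero_lt_of_lt hm) (by rw [hi, pow_succ'])⟩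

theorem one_notMem_parts_iff_forall_dvd {m n : ℕ} (hm : 1 < m) {P : n.Partition}
    (hP : P ∈ maryPartitions m n) : 1 ∉ P.parts ↔ ∀ p ∈ P.parts, m ∣ p := by
  refine ⟨fun h1 p hp => ?_, fun hdvd h1 => hm.ne' (Nat.dvd_one.1 (hdvd 1 h1))⟩
  obtain ⟨_ | i, rfl⟩ := mem_maryPartitions.1 hP p hp
  · exact absurd hp (by simpa using h1)
  · exact dvd_pow_self m i.succ_ne_zero

theorem sum_maryPartitions_one_notMem {m : ℕ} (hm : 1 < m) (n : ℕ) :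
    ∑ P ∈ maryPartitions m n with 1 ∉ P.parts, (-1 : ℤ) ^ P.parts.card =
      if m ∣ n then signedCount m (n / m) else 0 := by
  classical
  rw [sum_congr (filter_congr fun P hP => one_notMem_parts_iff_forall_dvd hm hP) fun _ _ => rfl]
  split_ifs with hmn
  · obtain ⟨t, rfl⟩ := hmn
    rw [Nat.mul_div_cancel_left t (by omega), signedCount, ← sum_subtype_eq_sum_filter]
    refine (sum_equiv (Nat.Partition.partsDvdEquiv (by omega)).symm ?_ ?_).symm
    · intro Q
      simp only [mem_subtype, mem_maryPartitions, Nat.Partition.partsDvdEquiv_symm_apply_parts,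
        Multiset.forall_mem_map_iff, exists_mul_eq_pow_iff hm]
    · intro Q _
      rw [Nat.Partition.partsDvdEquiv_symm_apply_parts, Multiset.card_map]
  · refine sum_eq_zero fun P hP => absurd ?_ hmn
    exact P.parts_sum ▸ Multiset.dvd_sum (mem_filter.1 hP).2

theorem signedCount_succ {m : ℕ} (hm : 1 < m) (n : ℕ) :
    signedCount m (n + 1) + signedCount m n =
      if m ∣ n + 1 then signedCount m ((n + 1) / m) else 0 := by
  rw [signedCount, ← sum_filter_add_sum_filter_not _ (1 ∈ ·.parts), sum_maryPartitions_one_mem,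
    sum_maryPartitions_one_notMem hm]
  ring

section Recurrence

variable {m : ℕ} {a : ℕ → ℤ}

theorem neg_one_pow_mod_of_even {R : Type*} [Monoid R] [HasDistribNeg R] (hm : Even m) (n : ℕ) :
    (-1 : R) ^ (n % m) = (-1) ^ n := by
  conv_rhs => rw [← Nat.mod_add_div n m, pow_add, (hm.mul_right _).neg_one_pow, mul_one]

theorem eq_neg_one_pow_mul_sum_range_of_rec (hm : Even m)
    (hrec : ∀ n, a (n + 1) + a n = if m ∣ n + 1 then a ((n + 1) / m) else 0) (n : ℕ) :
    a n = (-1) ^ n * ∑ t ∈ range (n / m + 1), a t := by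
  induction n with
  | zero => simp
  | succ n ih =>
    have h := hrec n
    by_cases hdvd : m ∣ n + 1
    · have hq : (n + 1) / m = n / m + 1 := by rw [Nat.succ_div, if_pos hdvd]
      have hn : Odd n := Nat.not_even_iff_odd.1 <| Nat.even_add_one.1 <|
        even_iff_two_dvd.2 (hm.two_dvd.trans hdvd)
      rw [if_pos hdvd, hq] at h
      rw [hn.neg_one_pow] at ih
      rw [hq, sum_range_succ, pow_succ, hn.neg_one_pow]
      linear_combination h - ih
    · have hq : (n + 1) / m = n / m := by rw [Nat.succ_div, if_neg hdvd, add_zero]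
      rw [if_neg hdvd] at h
      rw [hq, pow_succ]
      linear_combination h - ih

-- Within each block of `m` consecutive `t`, the terms `(-1)^t S(t / m)` cancel in pairs.
theorem sum_range_succ_eq_ite_of_rec (hm : Even m)
    (hrec : ∀ n, a (n + 1) + a n = if m ∣ n + 1 then a ((n + 1) / m) else 0) (s : ℕ) :
    ∑ t ∈ range (s + 1), a t = if Even (s % m) then ∑ t ∈ range (s / m + 1), a t else 0 := by
  induction s with
  | zero => simp
  | succ s ih =>
    have hs := Nat.mod_add_div s m
    have hs' := Nat.mod_add_div (s + 1) m
    rw [sum_range_succ, ih, eq_neg_one_pow_mul_sum_range_of_rec hm hrec (s + 1),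
      ← neg_one_pow_mod_of_even hm (s + 1)]
    by_cases hdvd : m ∣ s + 1
    · have hq : (s + 1) / m = s / m + 1 := by rw [Nat.succ_div, if_pos hdvd]
      have hr : (s + 1) % m = 0 := Nat.mod_eq_zero_of_dvd hdvd
      have hodd : ¬Even (s % m) := by
        rw [hq, hr, mul_add, mul_one] at hs'
        obtain ⟨k, hk⟩ := hm
        rw [Nat.not_even_iff_odd]
        exact ⟨k - 1, by omega⟩
      simp [hq, hr, hodd]
    · have hq : (s + 1) / m = s / m := by rw [Nat.succ_div, if_neg hdvd, add_zero]
      have hr : (s + 1) % m = s % m + 1 := by rw [hq] at hs'; omega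
      rw [hq, hr, pow_succ]
      rcases Nat.even_or_odd (s % m) with he | he
      · simp [he, he.neg_one_pow, Nat.even_add_one]
      · simp [he.neg_one_pow, Nat.even_add_one, Nat.not_even_iff_odd.2 he]

theorem abs_le_one_of_rec (hm : Even m) (hm0 : m ≠ 0) (h0 : a 0 = 1)
    (hrec : ∀ n, a (n + 1) + a n = if m ∣ n + 1 then a ((n + 1) / m) else 0) (n : ℕ) :
    |a n| ≤ 1 := by
  have hsum : ∀ s, |∑ t ∈ range (s + 1), a t| ≤ 1 := by
    intro s
    induction s using Nat.strong_induction_on with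
    | _ s ih =>
      rcases Nat.eq_zero_or_pos s with rfl | hs
      · simp [h0]
      rw [sum_range_succ_eq_ite_of_rec hm hrec]
      split_ifs
      · exact ih _ (Nat.div_lt_self hs (by obtain ⟨k, rfl⟩ := hm; omega))
      · simp
  rw [eq_neg_one_pow_mul_sum_range_of_rec hm hrec, abs_mul, abs_neg_one_pow, one_mul]
  exact hsum _

end Recurrence

/-- For even m ≥ 2, |e_m(n) - o_m(n)| ≤ 1 for all n. -/
theorem abs_em_sub_om_le_one (m : ℕ) (hm : 2 ≤ m) (hme : Even m) (n : ℕ) :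
    |(evenParts m n : ℤ) - (oddParts m n : ℤ)| ≤ 1 := by
  rw [evenParts_sub_oddParts]
  exact abs_le_one_of_rec hme (by omega) (signedCount_zero m) (signedCount_succ hm) n
end

section
/- Let m ≥ 2 and let ε ∈ (0,1). If t ∈ ℂ satisfies |t| > max{ε^{-1/(m-1)}, (ε(1-ε))^{-1/m}}, then for every n ≥ 1, |p_m(n,t) - t·p_m(n-1,t)| < ε·|t·p_m(n-1,t)|. -/
open Polynomial

section Recurrence

variable {A : Type*} [Ring A] {m : ℕ} (t : A)

theorem aeval_pm_zero : aeval t (pm m 0) = 1 := by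
  rw [pm, map_one]

theorem aeval_pm_succ_of_not_dvd {n : ℕ} (h : ¬ m ∣ n + 1) :
    aeval t (pm m (n + 1)) = t * aeval t (pm m n) := by
  rw [pm, dif_neg (by tauto), add_zero, map_mul, aeval_X]

theorem aeval_pm_succ_sub_of_eq_mul (hm : 2 ≤ m) {n k : ℕ} (h : n + 1 = m * k) :
    aeval t (pm m (n + 1)) - t * aeval t (pm m n) = aeval t (pm m k) := by
  have hk : (n + 1) / m = k := by rw [h, Nat.mul_div_cancel_left k (by omega)]
  rw [pm, dif_pos ⟨hm, h ▸ dvd_mul_right m k⟩, hk, map_add, map_mul, aeval_X, add_sub_cancel_left]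

end Recurrence

theorem le_of_step_growth {Q : ℕ → ℝ} {m a b : ℕ} {r s : ℝ} (hr : 0 ≤ r) (hs : 0 ≤ s)
    (hab : a ≤ b) (hstep : ∀ i, a ≤ i → i < b → s * (r * Q i) ≤ Q (i + 1))
    (hstep_of_not_dvd : ∀ i, a ≤ i → i < b → ¬ m ∣ i + 1 → r * Q i ≤ Q (i + 1)) :
    r ^ (b - a) * (s ^ (b / m - a / m) * Q a) ≤ Q b := by
  induction b, hab using Nat.le_induction with
  | base => simp
  | succ b hab ih =>
    have ih := ih (fun i hi hib => hstep i hi (by omega))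
      (fun i hi hib => hstep_of_not_dvd i hi (by omega))
    have hdiv : a / m ≤ b / m := Nat.div_le_div_right hab
    rw [Nat.succ_sub hab, pow_succ, Nat.succ_div]
    split_ifs with hdvd
    · calc r ^ (b - a) * r * (s ^ (b / m + 1 - a / m) * Q a)
          = s * (r * (r ^ (b - a) * (s ^ (b / m - a / m) * Q a))) := by
            rw [Nat.sub_add_comm hdiv, pow_succ]; ring
        _ ≤ s * (r * Q b) := by gcongr
        _ ≤ Q (b + 1) := hstep b hab b.lt_succ_self
    · calc r ^ (b - a) * r * (s ^ (b / m + 0 - a / m) * Q a)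
          = r * (r ^ (b - a) * (s ^ (b / m - a / m) * Q a)) := by ring_nf
        _ ≤ r * Q b := by gcongr
        _ ≤ Q (b + 1) := hstep_of_not_dvd b hab b.lt_succ_self hdvd

theorem one_lt_mul_pow_mul_pow {ε s r : ℝ} {m c e : ℕ} (hε0 : 0 ≤ ε) (hε1 : ε ≤ 1)
    (hs : 0 ≤ s) (hr : 1 ≤ r) (h₁ : 1 < ε * r ^ (m - 1)) (h₂ : 1 < ε * (s * r ^ m))
    (hcm : c * m ≤ e) (hme : m - 1 ≤ e) :
    1 < ε * (s ^ c * r ^ e) := by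
  rcases Nat.eq_zero_or_pos c with rfl | hc
  · calc 1 < ε * r ^ (m - 1) := h₁
      _ ≤ ε * (s ^ 0 * r ^ e) := by rw [pow_zero, one_mul]; gcongr
  · have hsr : 1 ≤ s * r ^ m := by
      by_contra! h
      nlinarith [mul_le_of_le_one_left (by positivity : 0 ≤ s * r ^ m) hε1]
    calc 1 < ε * (s * r ^ m) := h₂
      _ ≤ ε * (s * r ^ m) ^ c := by gcongr; exact le_self_pow₀ hsr hc.ne'
      _ = ε * (s ^ c * r ^ (c * m)) := by rw [mul_pow, ← pow_mul, mul_comm m]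
      _ ≤ ε * (s ^ c * r ^ e) := by gcongr

theorem one_lt_mul_pow_of_rpow_neg_inv_lt {a r : ℝ} (ha : 0 < a) {k : ℕ} (hk : k ≠ 0)
    (h : a ^ (-1 / (k : ℝ)) < r) : 1 < a * r ^ k := by
  have hpow : a⁻¹ < r ^ k := by
    have := pow_lt_pow_left₀ h (by positivity) hk
    rwa [neg_div, one_div, Real.rpow_neg ha.le, inv_pow, Real.rpow_inv_natCast_pow ha.le hk]
      at this
  rwa [inv_lt_iff_one_lt_mul₀ ha, mul_comm] at hpow

theorem div_sub_div_mul_le_of_succ_eq_mul {m n k : ℕ} (hm : 0 < m) (h : n + 1 = m * k) :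
    (n / m - k / m) * m ≤ n + 1 - k := by
  have hk : 0 < k := Nat.pos_of_ne_zero (by rintro rfl; omega)
  have hn : n / m = k - 1 := Nat.div_eq_of_lt_le (by rw [Nat.sub_one_mul]; lia)
    (by rw [Nat.sub_add_cancel hk]; lia)
  have := Nat.div_add_mod' k m
  have := Nat.mod_lt k hm
  rw [hn, Nat.sub_mul, Nat.sub_one_mul]
  lia

theorem pred_le_succ_sub_of_succ_eq_mul {m n k : ℕ} (h : n + 1 = m * k) : m - 1 ≤ n + 1 - k := by
  have hk : 0 < k := Nat.pos_of_ne_zero (by rintro rfl; omega)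
  have : n + 1 - k = (m - 1) * k := by rw [Nat.sub_one_mul]; lia
  rw [this]; exact Nat.le_mul_of_pos_right _ hk

theorem one_sub_mul_norm_le_norm_of_norm_sub_le {E : Type*} [SeminormedAddCommGroup E]
    {ε : ℝ} {y z : E} (h : ‖y - z‖ ≤ ε * ‖z‖) : (1 - ε) * ‖z‖ ≤ ‖y‖ := by
  linarith [norm_sub_norm_le z y, norm_sub_rev y z]

theorem norm_aeval_pm_succ_sub_lt {𝕜 : Type*} [NormedDivisionRing 𝕜] {m : ℕ} (hm : 2 ≤ m)
    {ε : ℝ} (hε0 : 0 < ε) (hε1 : ε < 1) {t : 𝕜} (ht : 1 ≤ ‖t‖)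
    (h₁ : 1 < ε * ‖t‖ ^ (m - 1)) (h₂ : 1 < ε * ((1 - ε) * ‖t‖ ^ m)) (n : ℕ) :
    ‖aeval t (pm m (n + 1)) - t * aeval t (pm m n)‖ < ε * ‖t * aeval t (pm m n)‖ := by
  have hε' : 0 < 1 - ε := by linarith
  have ht0 : 0 < ‖t‖ := by linarith
  induction n using Nat.strong_induction_on with
  | _ n ih =>
  have hgrowth : ∀ a b, a ≤ b → b ≤ n →
      ‖t‖ ^ (b - a) * ((1 - ε) ^ (b / m - a / m) * ‖aeval t (pm m a)‖) ≤
        ‖aeval t (pm m b)‖ := fun a b hab hbn =>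
    le_of_step_growth (Q := fun i => ‖aeval t (pm m i)‖) ht0.le hε'.le hab
      (fun i _ hib => by
        simpa only [norm_mul] using one_sub_mul_norm_le_norm_of_norm_sub_le (ih i (by omega)).le)
      (fun i _ _ hdvd => by rw [aeval_pm_succ_of_not_dvd t hdvd, norm_mul])
  have hpos : ∀ a ≤ n, 0 < ‖aeval t (pm m a)‖ := fun a ha => by
    have h := hgrowth 0 a a.zero_le ha
    rw [aeval_pm_zero, norm_one, Nat.sub_zero, Nat.zero_div, Nat.sub_zero, mul_one] at h
    exact h.trans_lt' (by positivity)
  by_cases hdvd : m ∣ n + 1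
  · obtain ⟨k, hk⟩ := hdvd
    have hkn : k ≤ n := by nlinarith
    rw [aeval_pm_succ_sub_of_eq_mul t hm hk, norm_mul]
    calc ‖aeval t (pm m k)‖
        < ε * ((1 - ε) ^ (n / m - k / m) * ‖t‖ ^ (n + 1 - k)) * ‖aeval t (pm m k)‖ :=
          lt_mul_left (hpos k hkn) (one_lt_mul_pow_mul_pow hε0.le hε1.le hε'.le ht h₁ h₂
            (div_sub_div_mul_le_of_succ_eq_mul (by omega) hk) (pred_le_succ_sub_of_succ_eq_mul hk))
      _ = ε * (‖t‖ * (‖t‖ ^ (n - k) * ((1 - ε) ^ (n / m - k / m) * ‖aeval t (pm m k)‖))) := by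
          rw [Nat.sub_add_comm hkn, pow_succ]; ring
      _ ≤ ε * (‖t‖ * ‖aeval t (pm m n)‖) := by gcongr; exact hgrowth k n hkn le_rfl
  · rw [aeval_pm_succ_of_not_dvd t hdvd, sub_self, norm_zero, norm_mul]
    have := hpos n le_rfl
    positivity

/-- Lemma on the smallness of p_m(n,t) - t·p_m(n-1,t) for |t| large. -/
theorem pm_diff_small (m : ℕ) (hm : 2 ≤ m) (ε : ℝ) (hε : ε ∈ Set.Ioo (0 : ℝ) 1)
    (t : ℂ) (ht : ‖t‖ >
      max (ε ^ (-(1 : ℝ) / ((m : ℝ) - 1))) ((ε * (1 - ε)) ^ (-(1 : ℝ) / (m : ℝ))))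
    (n : ℕ) (hn : 1 ≤ n) :
    ‖(Polynomial.aeval t) (pm m n) - t * (Polynomial.aeval t) (pm m (n - 1))‖ <
      ε * ‖t * (Polynomial.aeval t) (pm m (n - 1))‖ := by
  obtain ⟨hε0, hε1⟩ := hε
  obtain ⟨ht₁, ht₂⟩ := max_lt_iff.mp ht
  have h₁ : 1 < ε * ‖t‖ ^ (m - 1) := one_lt_mul_pow_of_rpow_neg_inv_lt hε0 (by omega)
    (by rwa [Nat.cast_pred (by omega)])
  have h₂ : 1 < ε * ((1 - ε) * ‖t‖ ^ m) := by
    rw [← mul_assoc]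
    exact one_lt_mul_pow_of_rpow_neg_inv_lt (mul_pos hε0 (by linarith)) (by omega) ht₂
  have ht1 : 1 ≤ ‖t‖ := by
    refine le_of_lt ((one_lt_pow_iff_of_nonneg (norm_nonneg t) (by omega : m - 1 ≠ 0)).mp ?_)
    nlinarith [pow_nonneg (norm_nonneg t) (m - 1)]
  obtain ⟨n, rfl⟩ := Nat.exists_eq_add_of_le' hn
  exact norm_aeval_pm_succ_sub_lt hm hε0 hε1 ht1 h₁ h₂ n
end

section
/- Let M = (m_i) with m_0=1, m_i ≥ 2, let M' = (1, m_2, m_3, …), and let f(m,t) := (t^m - 1)/(t - 1). Write n = k m_2 + r with r ∈ {0,…,m_2 - 1}. Then p_M(m_1 n, t) ≡ t^r f(r+1, t^{m_1 - 1}) · p_{M'}(k m_2, t) modulo the polynomial t^{m_1 + m_2 - 1} f(m_2, t^{m_1 - 1}). -/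
def shiftSeq (m : ℕ → ℕ) : ℕ → ℕ := fun i => if i = 0 then 1 else m (i + 1)

noncomputable def pM : (ℕ → ℕ) → ℕ → Polynomial ℤ
  | _, 0 => 1
  | m, n + 1 =>
      Polynomial.X * pM m n +
        if h : 2 ≤ m 1 ∧ m 1 ∣ (n + 1) then pM (shiftSeq m) ((n + 1) / m 1) else 0
termination_by m n => n
decreasing_by
  · exact Nat.lt_succ_self n
  · exact Nat.div_lt_self (Nat.succ_pos n) (by omega)

/-- f(a, t^e) = 1 + t^e + t^(2e) + ⋯ + t^((a-1)e), i.e. f(a,s) = (s^a-1)/(s-1) at s = t^e. -/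
noncomputable def fpow (a e : ℕ) : Polynomial ℤ :=
  ∑ i ∈ Finset.range a, Polynomial.X ^ (e * i)

/-! Write `P a := p_M(m₁ a)`. Then `P (a + 1) = t^{m₁} P a + p_{M'}(a + 1)`, and
`p_{M'}(m₂ k + s) = t^s p_{M'}(m₂ k)` for `s < m₂`. Hence, going from `n` to `n + 1` inside a block
`m₂ k ≤ n < m₂ (k + 1)`, the error of the congruence is multiplied by `t^{m₁}`, while at the end of
the block the main term has become `t^{m₁} · t^{m₂-1} f(m₂, t^{m₁-1}) p_{M'}(m₂ k)`, which is a
multiple of the modulus; so each block starts afresh with `P (m₂ k) ≡ p_{M'}(m₂ k)`. -/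

open Polynomial

lemma pM_zero (m : ℕ → ℕ) : pM m 0 = 1 := by rw [pM]

lemma pM_succ (m : ℕ → ℕ) (n : ℕ) : pM m (n + 1) = X * pM m n +
    if 2 ≤ m 1 ∧ m 1 ∣ n + 1 then pM (shiftSeq m) ((n + 1) / m 1) else 0 := by
  rw [pM, dite_eq_ite]

lemma pM_mul_add_of_lt (m : ℕ → ℕ) (a : ℕ) {s : ℕ} (hs : s < m 1) :
    pM m (m 1 * a + s) = X ^ s * pM m (m 1 * a) := by
  induction s with
  | zero => simp
  | succ s ih =>
    have hndvd : ¬ m 1 ∣ m 1 * a + s + 1 := by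
      rw [add_assoc, Nat.dvd_add_right (dvd_mul_right _ _)]
      exact Nat.not_dvd_of_pos_of_lt (Nat.succ_pos s) hs
    rw [← add_assoc, pM_succ, if_neg (fun h => hndvd h.2), add_zero, ih (by omega), ← mul_assoc,
      ← pow_succ']

lemma pM_mul_succ (m : ℕ → ℕ) (hm : 2 ≤ m 1) (a : ℕ) :
    pM m (m 1 * (a + 1)) = X ^ m 1 * pM m (m 1 * a) + pM (shiftSeq m) (a + 1) := by
  have hsplit : m 1 * (a + 1) = m 1 * a + (m 1 - 1) + 1 := by rw [mul_add_one]; omega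
  have hdvd : m 1 ∣ m 1 * a + (m 1 - 1) + 1 := hsplit ▸ dvd_mul_right _ _
  rw [hsplit, pM_succ, if_pos ⟨hm, hdvd⟩, ← hsplit, Nat.mul_div_cancel_left _ (by omega),
    pM_mul_add_of_lt m a (by omega), ← mul_assoc, ← pow_succ', Nat.sub_add_cancel (by omega)]

lemma fpow_succ (a e : ℕ) : fpow (a + 1) e = 1 + X ^ e * fpow a e := by
  simp only [fpow, pow_mul, geom_sum_succ]
  ring

section
variable (m : ℕ → ℕ)

lemma pM_shiftSeq_mul_add (a : ℕ) {s : ℕ} (hs : s < m 2) :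
    pM (shiftSeq m) (m 2 * a + s) = X ^ s * pM (shiftSeq m) (m 2 * a) :=
  pM_mul_add_of_lt (shiftSeq m) a hs

lemma dvd_pM_mul_add_sub_of_dvd (hm1 : 2 ≤ m 1) (k : ℕ)
    (hbase : X ^ (m 1 + m 2 - 1) * fpow (m 2) (m 1 - 1) ∣
      pM m (m 1 * (m 2 * k)) - pM (shiftSeq m) (m 2 * k)) {r : ℕ} (hr : r < m 2) :
    X ^ (m 1 + m 2 - 1) * fpow (m 2) (m 1 - 1) ∣
      pM m (m 1 * (m 2 * k + r)) - X ^ r * fpow (r + 1) (m 1 - 1) * pM (shiftSeq m) (m 2 * k) := by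
  induction r with
  | zero => simpa [fpow] using hbase
  | succ r ih =>
    have hstep : pM m (m 1 * (m 2 * k + (r + 1))) -
          X ^ (r + 1) * fpow (r + 1 + 1) (m 1 - 1) * pM (shiftSeq m) (m 2 * k) =
        X ^ m 1 * (pM m (m 1 * (m 2 * k + r)) -
          X ^ r * fpow (r + 1) (m 1 - 1) * pM (shiftSeq m) (m 2 * k)) := by
      obtain ⟨c, hc⟩ : ∃ c, m 1 = c + 1 := ⟨m 1 - 1, by omega⟩
      rw [← add_assoc, pM_mul_succ m hm1, add_assoc, pM_shiftSeq_mul_add m k hr, fpow_succ, hc,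
        Nat.add_sub_cancel]
      ring
    rw [hstep]
    exact dvd_mul_of_dvd_right (ih (by omega)) _

lemma dvd_pM_mul_sub_pM_shiftSeq (hm1 : 2 ≤ m 1) (hm2 : 0 < m 2) (k : ℕ) :
    X ^ (m 1 + m 2 - 1) * fpow (m 2) (m 1 - 1) ∣
      pM m (m 1 * (m 2 * k)) - pM (shiftSeq m) (m 2 * k) := by
  induction k with
  | zero => simp [pM_zero]
  | succ k ih =>
    have hlast := dvd_pM_mul_add_sub_of_dvd m hm1 k ih (r := m 2 - 1) (by omega)
    rw [Nat.sub_add_cancel hm2] at hlast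
    have hsplit : m 2 * (k + 1) = m 2 * k + (m 2 - 1) + 1 := by rw [mul_add_one]; omega
    have hstep : pM m (m 1 * (m 2 * (k + 1))) - pM (shiftSeq m) (m 2 * (k + 1)) =
        X ^ m 1 * (pM m (m 1 * (m 2 * k + (m 2 - 1))) -
          X ^ (m 2 - 1) * fpow (m 2) (m 1 - 1) * pM (shiftSeq m) (m 2 * k)) +
        X ^ (m 1 + m 2 - 1) * fpow (m 2) (m 1 - 1) * pM (shiftSeq m) (m 2 * k) := by
      rw [hsplit, pM_mul_succ m hm1, show m 1 + m 2 - 1 = m 1 + (m 2 - 1) by omega, pow_add]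
      ring
    rw [hstep]
    exact dvd_add (dvd_mul_of_dvd_right hlast _) (dvd_mul_right _ _)

end

theorem pM_congruence_general (m : ℕ → ℕ) (hm : ∀ i ≥ 1, 2 ≤ m i)
    (n k r : ℕ) (hr : r < m 2) (hn : n = k * m 2 + r) :
    (Polynomial.X ^ (m 1 + m 2 - 1) * fpow (m 2) (m 1 - 1)) ∣
      (pM m (m 1 * n) -
        Polynomial.X ^ r * fpow (r + 1) (m 1 - 1) * pM (shiftSeq m) (k * m 2)) := by
  have hm1 : 2 ≤ m 1 := hm 1 le_rfl
  rw [hn, mul_comm k]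
  exact dvd_pM_mul_add_sub_of_dvd m hm1 k
    (dvd_pM_mul_sub_pM_shiftSeq m hm1 (Nat.zero_lt_of_lt hr) k) hr

/-- For n = k m₂ + r with 0 ≤ r < m₂,
p_M(m₁ n, t) ≡ t^r f(r+1, t^{m₁-1}) p_{M'}(k m₂, t) mod t^{m₁+m₂-1} f(m₂, t^{m₁-1}). -/
theorem pM_congruence (m : ℕ → ℕ) (h0 : m 0 = 1) (hm : ∀ i ≥ 1, 2 ≤ m i)
    (n k r : ℕ) (hr : r < m 2) (hn : n = k * m 2 + r) :
    (Polynomial.X ^ (m 1 + m 2 - 1) * fpow (m 2) (m 1 - 1)) ∣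
      (pM m (m 1 * n) -
        Polynomial.X ^ r * fpow (r + 1) (m 1 - 1) * pM (shiftSeq m) (k * m 2)) :=
  pM_congruence_general m hm n k r hr hn
end

section
/- Let M = (m_i) with m_0=1, m_i ≥ 2, and let n = a_0 + a_1 M_1 + ⋯ + a_k M_k be the M-ary representation of n. Then b_M(n) ≡ ∏_{j=1}^{k} (a_j + 1) (mod gcd(m_1, …, m_k)), where b_M(n) is the number of M-ary partitions of n. -/
/-- The number of M-ary partitions of n, i.e. partitions of n into parts of the form
Mᵢ = m₀m₁⋯mᵢ. -/
noncomputable def bM (m : ℕ → ℕ) (n : ℕ) : ℕ :=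
  Nat.card {P : n.Partition // ∀ p ∈ P.parts, ∃ i, p = ∏ j ∈ Finset.range (i + 1), m j}

/-!
Splitting off the parts equal to `M₀ = 1`, an `M`-ary partition of `n` is `m₁` times an
`M'`-ary partition of some `t ≤ n / m₁`, padded with ones, where `M' = (1, m₂, m₃, …)`; hence
`b_M(n) = ∑_{t ≤ n/m₁} b_{M'}(t)`. Feeding this into the partial sums `∑_{t ≤ N} b_M(t)` with
`N = a₀ + m₁ N'` groups the summands into `N'` complete blocks of length `m₁` and one block of
length `a₀ + 1`, so modulo `m₁` the partial sum is `(a₀ + 1) ∑_{t ≤ N'} b_{M'}(t)`. Induction on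
the number of digits shows that the partial sums are `∏ (aⱼ + 1)` modulo `gcd(m₁, …, m_{k-1})`,
and the recursion for `b_M(n)` turns this into the theorem.
-/

open Finset

abbrev PartitionsIn (S : Set ℕ) (n : ℕ) : Type := {P : n.Partition // ∀ p ∈ P.parts, p ∈ S}

namespace Multiset

def divNonOnes (d : ℕ) (s : Multiset ℕ) : Multiset ℕ := (s.filter (· ≠ 1)).map (· / d)

variable {S : Set ℕ} {d : ℕ} {s : Multiset ℕ}

theorem divNonOnes_map_mul_add_replicate (hd : 2 ≤ d) {q : Multiset ℕ} (hq : ∀ x ∈ q, 0 < x)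
    (r : ℕ) : divNonOnes d (q.map (d * ·) + replicate r 1) = q := by
  have hne : ∀ x ∈ q, d * x ≠ 1 := fun x hx => by nlinarith [hq x hx]
  rw [divNonOnes, filter_add, filter_eq_self.2 (by simpa using hne),
    filter_eq_nil.2 (fun x hx => by simp [eq_of_mem_replicate hx]), add_zero, map_map]
  conv_rhs => rw [← map_id q]
  exact map_congr rfl fun x _ => Nat.mul_div_cancel_left x (by omega)

theorem mem_divNonOnes (hd : 0 < d) (hs : ∀ p ∈ s, p ∈ {1} ∪ (d * ·) '' S) {q : ℕ}
    (hq : q ∈ divNonOnes d s) : q ∈ S ∧ d * q ∈ s := by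
  obtain ⟨p, hp, rfl⟩ := mem_map.1 hq
  obtain ⟨hp, hp1⟩ := mem_filter.1 hp
  obtain ⟨x, hx, rfl⟩ := (hs p hp).resolve_left hp1
  rw [Nat.mul_div_cancel_left x hd]
  exact ⟨hx, hp⟩

theorem replicate_add_map_mul_divNonOnes (hd : 0 < d) (hs : ∀ p ∈ s, p ∈ {1} ∪ (d * ·) '' S) :
    replicate (s.count 1) 1 + (divNonOnes d s).map (d * ·) = s := by
  have hmul : ∀ p ∈ s.filter (· ≠ 1), d * (p / d) = p := fun p hp => by
    obtain ⟨x, -, rfl⟩ := (hs p (mem_filter.1 hp).1).resolve_left (mem_filter.1 hp).2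
    rw [Nat.mul_div_cancel_left x hd]
  rw [divNonOnes, map_map, Function.comp_def, map_congr rfl hmul, map_id', ← filter_eq',
    filter_add_not]

theorem count_one_add_mul_sum_divNonOnes (hd : 0 < d)
    (hs : ∀ p ∈ s, p ∈ {1} ∪ (d * ·) '' S) : s.count 1 + d * (divNonOnes d s).sum = s.sum := by
  conv_rhs => rw [← replicate_add_map_mul_divNonOnes hd hs]
  rw [sum_add, sum_replicate, smul_eq_mul, mul_one, sum_map_mul_left, map_id']

end Multiset

namespace Nat.Partition

variable {S : Set ℕ} {d t n : ℕ}

def scalePad (n : ℕ) (hd : 0 < d) (h : d * t ≤ n) (Q : t.Partition) : n.Partition where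
  parts := Q.parts.map (d * ·) + Multiset.replicate (n - d * t) 1
  parts_pos hi := by
    rcases Multiset.mem_add.1 hi with hi | hi
    · obtain ⟨q, hq, rfl⟩ := Multiset.mem_map.1 hi
      exact Nat.mul_pos hd (Q.parts_pos hq)
    · rw [Multiset.eq_of_mem_replicate hi]; exact one_pos
  parts_sum := by
    rw [Multiset.sum_add, Multiset.sum_map_mul_left, Multiset.map_id', Q.parts_sum,
      Multiset.sum_replicate, smul_eq_mul, mul_one]
    omega

theorem divNonOnes_scalePad (hd : 2 ≤ d) (h : d * t ≤ n) (Q : t.Partition) :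
    (Q.scalePad n (by omega) h).parts.divNonOnes d = Q.parts :=
  Multiset.divNonOnes_map_mul_add_replicate hd (fun _ => Q.parts_pos) _

theorem mem_scalePad_parts {hd : 0 < d} {h : d * t ≤ n} {Q : t.Partition}
    (hQ : ∀ q ∈ Q.parts, q ∈ S) {p : ℕ} (hp : p ∈ (Q.scalePad n hd h).parts) :
    p ∈ {1} ∪ (d * ·) '' S := by
  rcases Multiset.mem_add.1 hp with hp | hp
  · obtain ⟨q, hq, rfl⟩ := Multiset.mem_map.1 hp
    exact Or.inr ⟨q, hQ q hq, rfl⟩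
  · exact Or.inl (Multiset.eq_of_mem_replicate hp)

theorem scalePad_eq_of_parts_eq_divNonOnes (hd : 0 < d) (h : d * t ≤ n) {P : n.Partition}
    (hP : ∀ p ∈ P.parts, p ∈ {1} ∪ (d * ·) '' S) {Q : t.Partition}
    (hQ : Q.parts = P.parts.divNonOnes d) : Q.scalePad n hd h = P := by
  have hsum := Multiset.count_one_add_mul_sum_divNonOnes hd hP
  rw [P.parts_sum, ← hQ, Q.parts_sum] at hsum
  refine Nat.Partition.ext ?_
  dsimp only [scalePad]
  conv_rhs => rw [← Multiset.replicate_add_map_mul_divNonOnes hd hP, add_comm]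
  rw [hQ]
  congr 2
  omega

end Nat.Partition

theorem card_partitionsIn_one_union_mul {S : Set ℕ} {d : ℕ} (hd : 2 ≤ d) (n : ℕ) :
    Nat.card (PartitionsIn ({1} ∪ (d * ·) '' S) n) =
      ∑ t ∈ range (n / d + 1), Nat.card (PartitionsIn S t) := by
  classical
  have hd0 : 0 < d := by omega
  have mem_range_iff (t : ℕ) : t ∈ range (n / d + 1) ↔ d * t ≤ n := by
    rw [mem_range, Nat.lt_succ_iff, Nat.le_div_iff_mul_le hd0, mul_comm]
  simp only [PartitionsIn, Nat.card_eq_fintype_card, Fintype.card_subtype]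
  rw [card_eq_sum_card_fiberwise (f := fun P => (P.parts.divNonOnes d).sum)
    (t := range (n / d + 1)) fun P hP => ?_]
  swap
  · have hsum := Multiset.count_one_add_mul_sum_divNonOnes hd0 (mem_filter.1 hP).2
    exact (mem_range_iff _).2 (by rw [P.parts_sum] at hsum; dsimp only; omega)
  refine sum_congr rfl fun t ht => ?_
  have hdt : d * t ≤ n := (mem_range_iff t).1 ht
  refine (card_nbij (Nat.Partition.scalePad n hd0 hdt) (fun Q hQ => ?_) (fun Q _ Q' _ h => ?_)
    (fun P hP => ?_)).symm
  · simp only [mem_coe, mem_filter, mem_univ, true_and] at hQ ⊢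
    exact ⟨fun p => Nat.Partition.mem_scalePad_parts hQ,
      by rw [Nat.Partition.divNonOnes_scalePad hd, Q.parts_sum]⟩
  · rw [Nat.Partition.ext_iff, ← Nat.Partition.divNonOnes_scalePad hd hdt Q,
      ← Nat.Partition.divNonOnes_scalePad hd hdt Q', h]
  · simp only [mem_coe, mem_filter, mem_univ, true_and] at hP
    obtain ⟨hT, rfl⟩ := hP
    have hmem q (hq : q ∈ P.parts.divNonOnes d) := Multiset.mem_divNonOnes hd0 hT hq
    exact ⟨⟨_, fun hq => Nat.pos_of_mul_pos_left (P.parts_pos (hmem _ hq).2), rfl⟩,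
      by simpa using fun q hq => (hmem q hq).1,
      Nat.Partition.scalePad_eq_of_parts_eq_divNonOnes hd0 hdt hT rfl⟩

theorem sum_range_mul_add_div (f : ℕ → ℕ) {b s : ℕ} (hb : 0 < b) (hs : s ≤ b) (q : ℕ) :
    ∑ t ∈ range (b * q + s), f (t / b) = b * ∑ u ∈ range q, f u + s * f q := by
  have block : ∀ {s q : ℕ}, s ≤ b → ∑ x ∈ range s, f ((b * q + x) / b) = s * f q := by
    intro s q hs
    rw [sum_congr rfl fun x hx => by
      rw [Nat.mul_add_div hb, Nat.div_eq_of_lt (by simp at hx; omega), add_zero]]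
    simp
  induction q generalizing s with
  | zero => simpa using block (q := 0) hs
  | succ q ih => rw [sum_range_add, block hs, mul_add_one, ih le_rfl, sum_range_succ]; ring

def placeValue (m : ℕ → ℕ) (i : ℕ) : ℕ := ∏ j ∈ range (i + 1), m j

def tailBase (m : ℕ → ℕ) (i : ℕ) : ℕ := if i = 0 then 1 else m (i + 1)

theorem bM_eq_card (m : ℕ → ℕ) (n : ℕ) :
    bM m n = Nat.card (PartitionsIn (Set.range (placeValue m)) n) :=
  Nat.card_congr (Equiv.subtypeEquivRight fun P => by simp [placeValue, eq_comm])

theorem bM_zero (m : ℕ → ℕ) : bM m 0 = 1 := by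
  rw [bM, Nat.card_eq_one_iff_unique]
  exact ⟨inferInstance, ⟨⟨default, by simp⟩⟩⟩

section PlaceValue

variable {m : ℕ → ℕ}

theorem tailBase_of_ne_zero {i : ℕ} (hi : i ≠ 0) : tailBase m i = m (i + 1) := if_neg hi

theorem two_le_tailBase (hm : ∀ i ≥ 1, 2 ≤ m i) : ∀ i ≥ 1, 2 ≤ tailBase m i := fun i hi => by
  rw [tailBase_of_ne_zero (by omega)]
  exact hm (i + 1) (by omega)

theorem placeValue_zero (h0 : m 0 = 1) : placeValue m 0 = 1 := by
  simp [placeValue, h0]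

theorem placeValue_succ (h0 : m 0 = 1) (i : ℕ) :
    placeValue m (i + 1) = m 1 * placeValue (tailBase m) i := by
  simp only [placeValue, prod_range_succ' _ (i + 1), prod_range_succ' _ i, tailBase, h0]
  simp [mul_comm]

theorem range_placeValue (h0 : m 0 = 1) :
    Set.range (placeValue m) = {1} ∪ (m 1 * ·) '' Set.range (placeValue (tailBase m)) := by
  rw [← Nat.range_of_succ, placeValue_zero h0, ← Set.range_comp]
  rw [show placeValue m ∘ Nat.succ = (m 1 * ·) ∘ placeValue (tailBase m) from
    funext (placeValue_succ h0)]

theorem sum_range_succ_mul_placeValue (h0 : m 0 = 1) (a : ℕ → ℕ) (k : ℕ) :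
    ∑ j ∈ range (k + 1), a j * placeValue m j =
      a 0 + m 1 * ∑ j ∈ range k, a (j + 1) * placeValue (tailBase m) j := by
  rw [sum_range_succ', placeValue_zero h0, mul_one, add_comm, mul_sum]
  congr 1
  exact sum_congr rfl fun j _ => by rw [placeValue_succ h0]; ring

theorem bM_eq_sum_range (h0 : m 0 = 1) (hm1 : 2 ≤ m 1) (n : ℕ) :
    bM m n = ∑ t ∈ range (n / m 1 + 1), bM (tailBase m) t := by
  simp only [bM_eq_card, range_placeValue h0]
  exact card_partitionsIn_one_union_mul hm1 n

end PlaceValue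

theorem sum_range_bM_modEq {g : ℕ} (k : ℕ) {m a : ℕ → ℕ} (h0 : m 0 = 1) (hm : ∀ i ≥ 1, 2 ≤ m i)
    (ha : ∀ j < k, a j < m (j + 1)) (hg : ∀ j ∈ Ico 1 k, g ∣ m j) :
    ∑ t ∈ range (∑ j ∈ range k, a j * placeValue m j + 1), bM m t ≡
      ∏ j ∈ range k, (a j + 1) [MOD g] := by
  induction k generalizing m a with
  | zero => simpa [bM_zero] using Nat.ModEq.refl 1
  | succ k ih =>
    set N := ∑ j ∈ range k, a (j + 1) * placeValue (tailBase m) j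
    let cumul (x : ℕ) := ∑ t ∈ range (x + 1), bM (tailBase m) t
    have hm1 : 2 ≤ m 1 := hm 1 le_rfl
    have hblocks : ∑ t ∈ range (∑ j ∈ range (k + 1), a j * placeValue m j + 1), bM m t =
        m 1 * ∑ x ∈ range N, cumul x + (a 0 + 1) * cumul N := by
      rw [sum_range_succ_mul_placeValue h0, add_right_comm, add_comm,
        sum_congr rfl fun t _ => bM_eq_sum_range h0 hm1 t]
      exact sum_range_mul_add_div cumul (by omega : 0 < m 1) (s := a 0 + 1) (ha 0 (by omega)) N
    have hC : cumul N ≡ ∏ j ∈ range k, (a (j + 1) + 1) [MOD g] :=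
      ih rfl (two_le_tailBase hm)
        (fun j hj => by rw [tailBase_of_ne_zero j.succ_ne_zero]; exact ha (j + 1) (by omega))
        (fun j hj => by
          rw [mem_Ico] at hj
          rw [tailBase_of_ne_zero (by omega)]
          exact hg (j + 1) (mem_Ico.2 (by omega)))
    have hfull_blocks : m 1 * ∑ x ∈ range N, cumul x ≡ 0 [MOD g] := by
      rcases k with _ | k
      · simp [N, Nat.ModEq]
      · exact Nat.modEq_zero_iff_dvd.2 (dvd_mul_of_dvd_left (hg 1 (by simp)) _)
    rw [hblocks, prod_range_succ', mul_comm _ (a 0 + 1)]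
    simpa only [zero_add] using hfull_blocks.add (hC.mul_left (a 0 + 1))

/-- If n = a₀ + a₁M₁ + ⋯ + a_kM_k is the M-ary representation of n, then
b_M(n) ≡ ∏ (aⱼ+1) mod gcd(m₁,…,m_k). -/
theorem bM_mod (m : ℕ → ℕ) (h0 : m 0 = 1) (hm : ∀ i ≥ 1, 2 ≤ m i)
    (n k : ℕ) (a : ℕ → ℕ) (ha : ∀ j ≤ k, a j < m (j + 1))
    (hn : n = ∑ j ∈ Finset.range (k + 1), a j * ∏ i ∈ Finset.range (j + 1), m i) :
    bM m n ≡ ∏ j ∈ Finset.Icc 1 k, (a j + 1) [MOD (Finset.Icc 1 k).gcd m] := by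
  have hm1 : 2 ≤ m 1 := hm 1 le_rfl
  have hq : n / m 1 = ∑ j ∈ range k, a (j + 1) * placeValue (tailBase m) j := by
    change n = ∑ j ∈ range (k + 1), a j * placeValue m j at hn
    rw [hn, sum_range_succ_mul_placeValue h0, Nat.add_mul_div_left _ _ (by omega),
      Nat.div_eq_of_lt (ha 0 (by omega)), zero_add]
  have hprod : ∏ j ∈ Icc 1 k, (a j + 1) = ∏ j ∈ range k, (a (j + 1) + 1) := by
    rw [range_eq_Ico, prod_Ico_add' (fun j => a j + 1), zero_add, Ico_add_one_right_eq_Icc]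
  rw [bM_eq_sum_range h0 hm1, hq, hprod]
  refine sum_range_bM_modEq k rfl (two_le_tailBase hm)
    (fun j hj => by rw [tailBase_of_ne_zero j.succ_ne_zero]; exact ha (j + 1) (by omega))
    (fun j hj => ?_)
  rw [mem_Ico] at hj
  rw [tailBase_of_ne_zero (by omega)]
  exact gcd_dvd (mem_Icc.2 (by omega))
end

section
/- Let m ≥ 2, let j, r ≥ 1, and let n be a positive integer with m ∤ n. If the number a_m(j, m^r n - 1) of partitions of m^r n - 1 into exactly j powers of m is at least 1, then j ≥ (m-1)r. -/
/-!
Write `N = m ^ r * n - 1` as a sum of `j` powers of `m`. Since `m ∣ N + 1`, the number `c` of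
parts equal to `1` satisfies `c + 1 = m * d` with `d ≥ 1`. Replacing those `c` ones by `d - 1` ones
and dividing every other part by `m` gives a representation of `N' = (N + 1) / m - 1` with at least
`m - 1` fewer parts, and `m ^ (r - 1) ∣ N' + 1`. After `r` such steps at least `(m - 1) * r` parts
have been removed.
-/

/-- The number of representations of N as a sum of exactly j powers of m. -/
noncomputable def am (m j N : ℕ) : ℕ :=
  Nat.card {P : N.Partition // (∀ p ∈ P.parts, ∃ i, p = m ^ i) ∧ Multiset.card P.parts = j}

theorem Multiset.sum_eq_mul_sum_map_div {m : ℕ} {t : Multiset ℕ} (h : ∀ p ∈ t, m ∣ p) :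
    t.sum = m * (t.map (· / m)).sum := by
  rw [← Multiset.sum_map_mul_left]
  conv_lhs => rw [← Multiset.map_id t]
  exact congrArg Multiset.sum
    (Multiset.map_congr rfl fun p hp => (Nat.mul_div_cancel' (h p hp)).symm)

theorem Multiset.replicate_count_add_filter_ne {α : Type*} [DecidableEq α] (s : Multiset α)
    (a : α) : Multiset.replicate (s.count a) a + s.filter (· ≠ a) = s := by
  rw [← Multiset.filter_eq' s a]
  exact Multiset.filter_add_not _ s

theorem exists_powers_sum_add_one_eq_mul {m : ℕ} {s : Multiset ℕ}
    (hs : ∀ p ∈ s, ∃ i, p = m ^ i) (hdvd : m ∣ s.sum + 1) :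
    ∃ s' : Multiset ℕ, (∀ p ∈ s', ∃ i, p = m ^ i) ∧ s.sum + 1 = m * (s'.sum + 1) ∧
      Multiset.card s' + (m - 1) ≤ Multiset.card s := by
  have hm : 0 < m := Nat.pos_of_dvd_of_pos hdvd (Nat.succ_pos _)
  set c := s.count 1
  set t := s.filter (· ≠ 1)
  have hsplit : Multiset.replicate c 1 + t = s := Multiset.replicate_count_add_filter_ne s 1
  have ht : ∀ p ∈ t, ∃ i, p = m ^ (i + 1) := by
    intro p hp
    obtain ⟨hps, hp1⟩ := Multiset.mem_filter.mp hp
    obtain ⟨_ | i, rfl⟩ := hs p hps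
    · exact absurd (pow_zero m) hp1
    · exact ⟨i, rfl⟩
  set u := t.map (· / m)
  have htu : t.sum = m * u.sum := Multiset.sum_eq_mul_sum_map_div fun p hp => by
    obtain ⟨i, rfl⟩ := ht p hp
    exact dvd_pow_self m i.succ_ne_zero
  have hsum : s.sum + 1 = c + 1 + m * u.sum := by
    rw [← hsplit, Multiset.sum_add, Multiset.sum_replicate, smul_eq_mul, mul_one, htu]
    ring
  obtain ⟨d, hd⟩ : m ∣ c + 1 := by
    rw [hsum] at hdvd
    exact (Nat.dvd_add_left (dvd_mul_right m _)).mp hdvd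
  obtain ⟨q, rfl⟩ : ∃ q, d = q + 1 :=
    Nat.exists_eq_succ_of_ne_zero fun hd0 => by simp [hd0] at hd
  refine ⟨Multiset.replicate q 1 + u, ?_, ?_, ?_⟩
  · intro p hp
    rcases Multiset.mem_add.mp hp with hp | hp
    · exact ⟨0, (Multiset.eq_of_mem_replicate hp).trans (pow_zero m).symm⟩
    · obtain ⟨q, hq, rfl⟩ := Multiset.mem_map.mp hp
      obtain ⟨i, rfl⟩ := ht q hq
      exact ⟨i, by rw [pow_succ, Nat.mul_div_cancel _ hm]⟩
  · rw [hsum, hd, Multiset.sum_add, Multiset.sum_replicate, smul_eq_mul, mul_one]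
    ring
  · have hcard : Multiset.card s = c + Multiset.card t := by
      rw [← hsplit, Multiset.card_add, Multiset.card_replicate]
    have : q ≤ m * q := Nat.le_mul_of_pos_left _ hm
    rw [mul_add_one] at hd
    simp only [Multiset.card_add, Multiset.card_replicate, Multiset.card_map, u, hcard]
    omega

theorem sub_one_mul_le_card_of_pow_dvd_sum_add_one {m : ℕ} (r : ℕ) {s : Multiset ℕ}
    (hs : ∀ p ∈ s, ∃ i, p = m ^ i) (hdvd : m ^ r ∣ s.sum + 1) :
    (m - 1) * r ≤ Multiset.card s := by
  induction r generalizing s with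
  | zero => simp
  | succ r ih =>
    have hm_dvd : m ∣ s.sum + 1 := (dvd_pow_self m r.succ_ne_zero).trans hdvd
    have hm : 0 < m := Nat.pos_of_dvd_of_pos hm_dvd (Nat.succ_pos _)
    obtain ⟨s', hs', hsum, hcard⟩ := exists_powers_sum_add_one_eq_mul hs hm_dvd
    rw [hsum, pow_succ', Nat.mul_dvd_mul_iff_left hm] at hdvd
    have := ih hs' hdvd
    rw [mul_add_one]
    omega

theorem am_pos_imp_general (m j r n : ℕ) (hm : 2 ≤ m)
    (hn : 0 < n) (h : 1 ≤ am m j (m ^ r * n - 1)) :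
    (m - 1) * r ≤ j := by
  obtain ⟨⟨P, hpow, rfl⟩⟩ := (Nat.card_pos_iff.mp h).1
  have hsum : P.parts.sum + 1 = m ^ r * n := by
    have : 0 < m ^ r * n := by positivity
    rw [P.parts_sum]
    omega
  exact sub_one_mul_le_card_of_pow_dvd_sum_add_one r hpow (by rw [hsum]; exact dvd_mul_right _ _)

/-- If m^r n - 1 (with m ∤ n) has a partition into exactly j powers of m, then j ≥ (m-1)r. -/
theorem am_pos_imp (m j r n : ℕ) (hm : 2 ≤ m) (hj : 1 ≤ j) (hr : 1 ≤ r)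
    (hn : 0 < n) (hnd : ¬ m ∣ n) (h : 1 ≤ am m j (m ^ r * n - 1)) :
    (m - 1) * r ≤ j :=
  am_pos_imp_general m j r n hm hn h
end

section
/- Let m ≥ 2 and k ≥ 1. For every n ≥ km/(m-1), the number a_m(n-k, n) of partitions of n into exactly n-k powers of m equals Σ_{k/m ≤ j ≤ k/(m-1)} a_m(mj - k, j). In particular, if 1 ≤ k ≤ m-2 and n ≥ km/(m-1), then a_m(n-k, n) = 0, and for each fixed k the sequence (a_m(n-k,n))_n is eventually constant. -/
open Finset

def indexWindow (m k : ℕ) : Finset ℕ :=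
  (range (k + 1)).filter (fun j => k ≤ m * j ∧ (m - 1) * j ≤ k)

section Arithmetic

variable {m k n j : ℕ}

lemma le_of_mul_le_mul_sub_one (hm : 1 < m) (hn : k * m ≤ n * (m - 1)) : k ≤ n :=
  Nat.le_of_mul_le_mul_right (hn.trans (Nat.mul_le_mul_left n (Nat.sub_le m 1))) (by omega)

lemma mul_le_of_mem_indexWindow (hm : 1 < m) (hn : k * m ≤ n * (m - 1))
    (hj : j ∈ indexWindow m k) : m * j ≤ n := by
  have hjk := (mem_filter.1 hj).2.2
  refine Nat.le_of_mul_le_mul_left ?_ (show 0 < m - 1 by omega)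
  calc (m - 1) * (m * j) = m * ((m - 1) * j) := by ring
    _ ≤ m * k := Nat.mul_le_mul_left m hjk
    _ ≤ (m - 1) * n := by rw [mul_comm, mul_comm (m - 1)]; exact hn

lemma mem_indexWindow_of_mul_eq_add (hm : 1 < m) {q : ℕ} (hq : q ≤ j) (h : m * j = q + k) :
    j ∈ indexWindow m k := by
  have hsub : (m - 1) * j = m * j - j := Nat.sub_one_mul m j
  have h2j : 2 * j ≤ m * j := Nat.mul_le_mul_right j hm
  simp only [indexWindow, mem_filter, mem_range]
  omega

lemma indexWindow_eq_empty (hk : 1 ≤ k) (hkm : k ≤ m - 2) : indexWindow m k = ∅ := by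
  refine filter_eq_empty_iff.2 fun j _ ⟨hmj, hjk⟩ => ?_
  rcases Nat.eq_zero_or_pos j with rfl | hj
  · omega
  · have : (m - 1) * 1 ≤ (m - 1) * j := Nat.mul_le_mul_left _ hj
    omega

end Arithmetic

open scoped Classical in
noncomputable def powPartitions (m j N : ℕ) : Finset N.Partition :=
  {P | (∀ p ∈ P.parts, ∃ i, p = m ^ i) ∧ Multiset.card P.parts = j}

lemma am_eq_card_powPartitions (m j N : ℕ) : am m j N = #(powPartitions m j N) := by
  classical
  rw [am, Nat.card_eq_fintype_card, Fintype.card_subtype, powPartitions]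

lemma mem_powPartitions {m j N : ℕ} {P : N.Partition} :
    P ∈ powPartitions m j N ↔ (∀ p ∈ P.parts, ∃ i, p = m ^ i) ∧ Multiset.card P.parts = j := by
  classical
  rw [powPartitions, mem_filter]
  simp

lemma Nat.Partition.sigma_mk_eq {s : Multiset ℕ} (hs : ∀ {x}, x ∈ s → 0 < x)
    (a : Σ j : ℕ, j.Partition) (h : s = a.2.parts) :
    (⟨s.sum, ⟨s, hs, rfl⟩⟩ : Σ j : ℕ, j.Partition) = a := by
  obtain ⟨j, parts, pos, rfl⟩ := a
  subst h
  rfl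

lemma Multiset.card_le_sum_of_pos {s : Multiset ℕ} (hs : ∀ x ∈ s, 0 < x) :
    Multiset.card s ≤ s.sum := by
  simpa using Multiset.card_nsmul_le_sum (a := 1) hs

namespace MAry

variable {m : ℕ}

def contract (m : ℕ) (s : Multiset ℕ) : Multiset ℕ :=
  (s.filter (· ≠ 1)).map (· / m)

def expand (m c : ℕ) (Q : Multiset ℕ) : Multiset ℕ :=
  Multiset.replicate c 1 + Q.map (m * ·)

lemma pos_of_eq_pow (hm : 0 < m) {p : ℕ} : (∃ i, p = m ^ i) → 0 < p := by
  rintro ⟨i, rfl⟩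
  exact pow_pos hm i

lemma sum_expand (c : ℕ) (Q : Multiset ℕ) : (expand m c Q).sum = c + m * Q.sum := by
  rw [expand, Multiset.sum_add, Multiset.sum_replicate, smul_eq_mul, mul_one,
    Multiset.sum_map_mul_left, Multiset.map_id']

lemma card_expand (c : ℕ) (Q : Multiset ℕ) :
    Multiset.card (expand m c Q) = c + Multiset.card Q := by
  simp [expand]

lemma expand_isPow {c : ℕ} {Q : Multiset ℕ} (hQ : ∀ q ∈ Q, ∃ i, q = m ^ i) :
    ∀ p ∈ expand m c Q, ∃ i, p = m ^ i := by
  intro p hp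
  rcases Multiset.mem_add.1 hp with h | h
  · exact ⟨0, by rw [Multiset.eq_of_mem_replicate h, pow_zero]⟩
  · obtain ⟨q, hq, rfl⟩ := Multiset.mem_map.1 h
    obtain ⟨i, rfl⟩ := hQ q hq
    exact ⟨i + 1, (pow_succ' m i).symm⟩

lemma contract_isPow (hm : 0 < m) {s : Multiset ℕ} (hs : ∀ p ∈ s, ∃ i, p = m ^ i) :
    ∀ q ∈ contract m s, ∃ i, q = m ^ i := by
  intro q hq
  obtain ⟨p, hp, rfl⟩ := Multiset.mem_map.1 hq
  obtain ⟨hp, hp1⟩ := Multiset.mem_filter.1 hp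
  obtain ⟨_ | i, rfl⟩ := hs p hp
  · exact absurd (pow_zero m) hp1
  · exact ⟨i, by rw [pow_succ, Nat.mul_div_cancel _ hm]⟩

lemma contract_pos (hm : 0 < m) {s : Multiset ℕ} (hs : ∀ p ∈ s, ∃ i, p = m ^ i) :
    ∀ q ∈ contract m s, 0 < q :=
  fun q hq => pos_of_eq_pow hm (contract_isPow hm hs q hq)

lemma expand_contract {s : Multiset ℕ} (hs : ∀ p ∈ s, ∃ i, p = m ^ i) :
    expand m (s.count 1) (contract m s) = s := by
  have hdvd : ∀ p ∈ s.filter (· ≠ 1), m * (p / m) = p := by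
    intro p hp
    obtain ⟨hp, hp1⟩ := Multiset.mem_filter.1 hp
    obtain ⟨_ | i, rfl⟩ := hs p hp
    · exact absurd (pow_zero m) hp1
    · exact Nat.mul_div_cancel' (dvd_pow_self m i.succ_ne_zero)
  rw [expand, contract, Multiset.map_map, Function.comp_def, Multiset.map_congr rfl hdvd,
    Multiset.map_id', ← Multiset.filter_eq', Multiset.filter_add_not]

lemma contract_expand (hm : 1 < m) (c : ℕ) (Q : Multiset ℕ) :
    contract m (expand m c Q) = Q := by
  have hne : ∀ q, m * q ≠ 1 := fun q h => by
    have := Nat.eq_one_of_mul_eq_one_right h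
    omega
  rw [contract, expand, Multiset.filter_add,
    Multiset.filter_eq_nil.2 (fun p hp => by simp [Multiset.eq_of_mem_replicate hp]),
    Multiset.filter_eq_self.2 (fun p hp => by
      obtain ⟨q, -, rfl⟩ := Multiset.mem_map.1 hp
      exact hne q),
    zero_add, Multiset.map_map]
  exact (Multiset.map_congr rfl fun q _ => Nat.mul_div_cancel_left q (by omega)).trans
    (Multiset.map_id' Q)

lemma sum_eq_count_one_add {s : Multiset ℕ} (hs : ∀ p ∈ s, ∃ i, p = m ^ i) :
    s.sum = s.count 1 + m * (contract m s).sum := by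
  conv_lhs => rw [← expand_contract hs]
  exact sum_expand _ _

lemma card_eq_count_one_add {s : Multiset ℕ} (hs : ∀ p ∈ s, ∃ i, p = m ^ i) :
    Multiset.card s = s.count 1 + Multiset.card (contract m s) := by
  conv_lhs => rw [← expand_contract hs]
  exact card_expand _ _

lemma sum_contract_mem_indexWindow {k n : ℕ} (hm : 1 < m) (hkn : k ≤ n) {P : n.Partition}
    (hP : P ∈ powPartitions m (n - k) n) :
    (contract m P.parts).sum ∈ indexWindow m k ∧
      Multiset.card (contract m P.parts) = m * (contract m P.parts).sum - k := by
  obtain ⟨hpow, hcard⟩ := mem_powPartitions.1 hP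
  have hsum := sum_eq_count_one_add hpow
  have hcard' := card_eq_count_one_add hpow
  have hle := Multiset.card_le_sum_of_pos (contract_pos (by omega) hpow)
  rw [P.parts_sum] at hsum
  exact ⟨mem_indexWindow_of_mul_eq_add hm hle (by omega), by omega⟩

theorem am_sub_eq_sum {k n : ℕ} (hm : 1 < m) (hn : k * m ≤ n * (m - 1)) :
    am m (n - k) n = ∑ j ∈ indexWindow m k, am m (m * j - k) j := by
  have hkn := le_of_mul_le_mul_sub_one hm hn
  simp only [am_eq_card_powPartitions, ← card_sigma]
  symm
  refine card_bij'
    (fun a ha => ⟨expand m (n - m * a.1) a.2.parts,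
      fun hp => pos_of_eq_pow (by omega)
        (expand_isPow (mem_powPartitions.1 (mem_sigma.1 ha).2).1 _ hp),
      by rw [sum_expand, a.2.parts_sum,
        Nat.sub_add_cancel (mul_le_of_mem_indexWindow hm hn (mem_sigma.1 ha).1)]⟩)
    (fun P hP => ⟨(contract m P.parts).sum,
      ⟨contract m P.parts, contract_pos (by omega) (mem_powPartitions.1 hP).1 _, rfl⟩⟩)
    ?_ ?_ ?_ ?_
  · rintro ⟨j, Q⟩ ha
    obtain ⟨hj, hQ⟩ := mem_sigma.1 ha
    obtain ⟨hQpow, hQcard⟩ := mem_powPartitions.1 hQ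
    have hkj := (mem_filter.1 hj).2.1
    have hjn := mul_le_of_mem_indexWindow hm hn hj
    refine mem_powPartitions.2 ⟨expand_isPow hQpow, ?_⟩
    rw [card_expand, hQcard]
    omega
  · intro P hP
    obtain ⟨hwin, hcard⟩ := sum_contract_mem_indexWindow hm hkn hP
    exact mem_sigma.2 ⟨hwin, mem_powPartitions.2 ⟨contract_isPow (by omega)
      (mem_powPartitions.1 hP).1, hcard⟩⟩
  · intro a _
    exact Nat.Partition.sigma_mk_eq _ a (contract_expand hm _ _)
  · intro P hP
    have hpow := (mem_powPartitions.1 hP).1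
    have hsum := sum_eq_count_one_add hpow
    rw [P.parts_sum] at hsum
    apply Nat.Partition.ext
    dsimp only
    rw [show n - m * (contract m P.parts).sum = P.parts.count 1 by omega, expand_contract hpow]

end MAry

/-- For n ≥ km/(m-1), a_m(n-k, n) = Σ_{k/m ≤ j ≤ k/(m-1)} a_m(mj-k, j); in particular
it vanishes for 1 ≤ k ≤ m-2 and is eventually constant in n. -/
theorem am_top_coefficients (m k : ℕ) (hm : 2 ≤ m) (hk : 1 ≤ k) :
    (∀ n : ℕ, k * m ≤ n * (m - 1) →
        am m (n - k) n =
          ∑ j ∈ (Finset.range (k + 1)).filter (fun j => k ≤ m * j ∧ (m - 1) * j ≤ k),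
            am m (m * j - k) j) ∧
    (k ≤ m - 2 → ∀ n : ℕ, k * m ≤ n * (m - 1) → am m (n - k) n = 0) ∧
    (∃ c : ℕ, ∀ n : ℕ, k * m ≤ n * (m - 1) → am m (n - k) n = c) := by
  have top_eq_sum := fun n (hn : k * m ≤ n * (m - 1)) => MAry.am_sub_eq_sum hm hn
  refine ⟨top_eq_sum, fun hkm n hn => ?_, ⟨_, top_eq_sum⟩⟩
  rw [top_eq_sum n hn, indexWindow_eq_empty hk hkm, sum_empty]
end
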